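/- For every integer n ≥ 4, Z_n ≥ 2 · 2^{⌊(n−4)/3⌋}; consequently 8 · Z_n³ ≥ 2^n, i.e., Z_n ≥ (1/2) · 2^{n/3}, so Z_n grows at least like (∛2)^n. -/

import Mathlib

/-!
Read backwards, a vector counted by `Z n` lists the leaf depths of a full binary tree starting
from a deepest leaf. Replacing that leaf, of depth `m`, by four leaves of depths
`m+2, m+2, m+2, m+2` or `m+3, m+3, m+2, m+1` adds three entries, keeps the list sorted and keeps
`∑ 2^{-ℓ} = 1`; the two rules are injective with disjoint images, so `Z (n+3) ≥ 2 Z n`.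
Applied to the single leaf of depth `0` they give `Z 4 ≥ 2`, and splitting the deepest leaf in two
gives `Z n ≤ Z (n+1)`, whence `Z n ≥ 2^{⌊(n-4)/3⌋+1}`. These cardinalities are those of finite
sets: the terms of index `< i` sum to a multiple of `2^{-ℓ_{i-1}}` below `1`, which forces
`ℓ_i < ℓ_{i-1} + n`.
-/

/-- `Z n` : the number of non-decreasing vectors `(ℓ₁,…,ℓ_n)` of positive integers
satisfying `Σ_{j=1}^n 2^{-ℓⱼ} = 1`. -/
noncomputable def Z (n : ℕ) : ℕ :=
  Nat.card {f : Fin n → ℕ // Monotone f ∧ (∀ j, 1 ≤ f j) ∧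
    ∑ j, ((2 : ℚ) ^ f j)⁻¹ = 1}

open Finset

theorem sum_inv_two_pow_le_one_sub {ι : Type*} (s : Finset ι) (ℓ : ι → ℕ) {m : ℕ}
    (hm : ∀ j ∈ s, ℓ j ≤ m) (hs : ∑ j ∈ s, ((2 : ℚ) ^ ℓ j)⁻¹ < 1) :
    ∑ j ∈ s, ((2 : ℚ) ^ ℓ j)⁻¹ ≤ 1 - ((2 : ℚ) ^ m)⁻¹ := by
  have hscale : ∑ j ∈ s, ((2 : ℚ) ^ ℓ j)⁻¹ = (∑ j ∈ s, 2 ^ (m - ℓ j) : ℕ) / 2 ^ m := by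
    rw [eq_div_iff (by positivity), Finset.sum_mul]
    push_cast
    refine Finset.sum_congr rfl fun j hj => ?_
    rw [← Nat.sub_add_cancel (hm j hj), pow_add, Nat.add_sub_cancel]
    field_simp
  rw [hscale, div_lt_one (by positivity)] at hs
  have : (∑ j ∈ s, 2 ^ (m - ℓ j) : ℕ) + 1 ≤ 2 ^ m := by exact_mod_cast hs
  rw [hscale, div_le_iff₀ (by positivity), sub_mul, inv_mul_cancel₀ (by positivity)]
  have : ((∑ j ∈ s, 2 ^ (m - ℓ j) : ℕ) : ℚ) + 1 ≤ 2 ^ m := by exact_mod_cast this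
  linarith

/-- The terms of index `< i` sum to a multiple of `2⁻ᵐ` below `1`, so the remaining terms, each at
most `2^{-f i}`, sum to at least `2⁻ᵐ`. -/
theorem two_pow_le_mul_two_pow {n : ℕ} {f : Fin n → ℕ} (hf : Monotone f)
    (hsum : ∑ j, ((2 : ℚ) ^ f j)⁻¹ = 1) (i : Fin n) {m : ℕ} (hm : ∀ j < i, f j ≤ m) :
    2 ^ f i ≤ 2 ^ m * n := by
  have hsplit := Finset.sum_filter_add_sum_filter_not univ (· < i) fun j => ((2 : ℚ) ^ f j)⁻¹
  rw [hsum] at hsplit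
  have htail_pos : 0 < ∑ j ∈ univ.filter (¬ · < i), ((2 : ℚ) ^ f j)⁻¹ :=
    Finset.sum_pos (fun j _ => by positivity) ⟨i, by simp⟩
  have hhead := sum_inv_two_pow_le_one_sub (univ.filter (· < i)) f
    (fun j hj => hm j (by simpa using hj)) (by linarith)
  have htail_le : ∑ j ∈ univ.filter (¬ · < i), ((2 : ℚ) ^ f j)⁻¹ ≤ n * ((2 : ℚ) ^ f i)⁻¹ :=
    calc _ ≤ ∑ _j ∈ univ.filter (¬ · < i), ((2 : ℚ) ^ f i)⁻¹ := by
          refine Finset.sum_le_sum fun j hj => ?_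
          gcongr
          · norm_num
          · exact hf (not_lt.1 (Finset.mem_filter.1 hj).2)
      _ ≤ n * ((2 : ℚ) ^ f i)⁻¹ := by
          rw [Finset.sum_const, nsmul_eq_mul]
          gcongr
          exact_mod_cast (Finset.card_filter_le _ _).trans (by simp)
  have : ((2 : ℚ) ^ m)⁻¹ ≤ n * ((2 : ℚ) ^ f i)⁻¹ := by linarith
  field_simp at this
  exact_mod_cast this

theorem Nat.lt_add_of_two_pow_le {a m n : ℕ} (h : 2 ^ a ≤ 2 ^ m * n) : a < m + n := by
  refine (Nat.pow_lt_pow_iff_right (by norm_num : 1 < 2)).1 (h.trans_lt ?_)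
  rw [pow_add]
  exact Nat.mul_lt_mul_of_pos_left Nat.lt_two_pow_self (by positivity)

theorem lt_succ_mul_of_sum_eq_one {n : ℕ} {f : Fin n → ℕ} (hf : Monotone f)
    (hsum : ∑ j, ((2 : ℚ) ^ f j)⁻¹ = 1) (i : Fin n) : f i < (i + 1) * n := by
  obtain ⟨k, hk⟩ := i
  induction k with
  | zero =>
    have := Nat.lt_add_of_two_pow_le <| two_pow_le_mul_two_pow hf hsum ⟨0, hk⟩ (m := 0)
      fun j hj => by simp [Fin.lt_def] at hj
    simpa using this
  | succ k ih =>
    have := Nat.lt_add_of_two_pow_le <| two_pow_le_mul_two_pow hf hsum ⟨k + 1, hk⟩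
      (m := f ⟨k, by omega⟩) fun j hj => hf (Fin.le_def.2 (by simp [Fin.lt_def] at hj; omega))
    have := ih (by omega)
    simp only at this ⊢
    linarith

def KraftVec (n : ℕ) : Type :=
  {f : Fin n → ℕ // Monotone f ∧ (∀ j, 1 ≤ f j) ∧ ∑ j, ((2 : ℚ) ^ f j)⁻¹ = 1}

instance (n : ℕ) : Finite (KraftVec n) := by
  refine Finite.of_injective (β := Fin n → Fin (n * n))
    (fun f i => ⟨f.1 i, (lt_succ_mul_of_sum_eq_one f.2.1 f.2.2.2 i).trans_le
      (Nat.mul_le_mul_right _ i.2)⟩) fun f g h => Subtype.ext (funext fun i => ?_)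
  simpa using congrFun h i

def kraftSum (l : List ℕ) : ℚ := (l.map fun x => ((2 : ℚ) ^ x)⁻¹).sum

structure IsKraft (l : List ℕ) : Prop where
  sortedGE : l.SortedGE
  one_le : ∀ x ∈ l, 1 ≤ x
  kraftSum_eq : kraftSum l = 1

/-- Non-increasing lists, so that a deepest leaf is the head. -/
def KraftList (n : ℕ) : Type := {l : List ℕ // l.length = n ∧ IsKraft l}

theorem isKraft_reverse_ofFn_iff {n : ℕ} (f : Fin n → ℕ) :
    IsKraft (List.ofFn f).reverse ↔
      Monotone f ∧ (∀ j, 1 ≤ f j) ∧ ∑ j, ((2 : ℚ) ^ f j)⁻¹ = 1 := by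
  have hsum : kraftSum (List.ofFn f).reverse = ∑ j, ((2 : ℚ) ^ f j)⁻¹ := by
    simp [kraftSum, List.sum_reverse, List.map_ofFn, List.sum_ofFn]
  refine ⟨fun ⟨h₁, h₂, h₃⟩ => ⟨?_, ?_, ?_⟩, fun ⟨h₁, h₂, h₃⟩ => ⟨?_, ?_, ?_⟩⟩
  all_goals simp_all [List.mem_ofFn]

noncomputable def kraftVecEquivKraftList (n : ℕ) : KraftVec n ≃ KraftList n :=
  Equiv.ofBijective (fun f => ⟨(List.ofFn f.1).reverse, by simp,
    (isKraft_reverse_ofFn_iff f.1).2 f.2⟩) <| by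
    refine ⟨fun f g h => Subtype.ext ?_, fun ⟨l, hl, hK⟩ => ?_⟩
    · simpa using congrArg Subtype.val h
    · subst hl
      set f : Fin l.length → ℕ := fun j => l.reverse[j]'(by simp)
      have hofFn : List.ofFn f = l.reverse := List.ext_getElem (by simp) fun _ _ _ => by simp [f]
      refine ⟨⟨f, (isKraft_reverse_ofFn_iff f).1 ?_⟩, Subtype.ext ?_⟩
      all_goals simp only [hofFn, List.reverse_reverse, hK]

instance (n : ℕ) : Finite (KraftList n) := .of_equiv _ (kraftVecEquivKraftList n)

def replaceHead (u : ℕ → List ℕ) : List ℕ → List ℕ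
  | [] => []
  | m :: t => u m ++ t

structure IsLeafExpansion (u : ℕ → List ℕ) (c : ℕ) : Prop where
  length_eq : ∀ m, (u m).length = c + 1
  sortedGE : ∀ m, (u m).SortedGE
  le_of_mem : ∀ m, ∀ x ∈ u m, m ≤ x
  kraftSum_eq : ∀ m, kraftSum (u m) = ((2 : ℚ) ^ m)⁻¹

theorem kraftSum_append (l l' : List ℕ) : kraftSum (l ++ l') = kraftSum l + kraftSum l' := by
  simp [kraftSum]

theorem IsKraft.ne_nil {l : List ℕ} (h : IsKraft l) : l ≠ [] := by
  rintro rfl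
  simpa [kraftSum] using h.kraftSum_eq

theorem IsKraft.replaceHead {u : ℕ → List ℕ} {c : ℕ} (hu : IsLeafExpansion u c) {l : List ℕ}
    (h : IsKraft l) : IsKraft (replaceHead u l) := by
  obtain ⟨hsorted, hpos, hsum⟩ := h
  cases l with
  | nil => simp [kraftSum] at hsum
  | cons m t =>
    rw [List.sortedGE_iff_pairwise, List.pairwise_cons] at hsorted
    refine ⟨List.sortedGE_iff_pairwise.2 <| List.pairwise_append.2
      ⟨List.sortedGE_iff_pairwise.1 (hu.sortedGE m), hsorted.2,
        fun x hx y hy => (hsorted.1 y hy).trans (hu.le_of_mem m x hx)⟩, ?_, ?_⟩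
    · intro x hx
      rcases List.mem_append.1 hx with hx | hx
      · exact (hpos m (by simp)).trans (hu.le_of_mem m x hx)
      · exact hpos x (by simp [hx])
    · rw [_root_.replaceHead, kraftSum_append, hu.kraftSum_eq, ← hsum]
      simp [kraftSum]

theorem length_replaceHead {u : ℕ → List ℕ} {c : ℕ} (hu : IsLeafExpansion u c) {l : List ℕ}
    (hl : l ≠ []) : (replaceHead u l).length = l.length + c := by
  obtain ⟨m, t, rfl⟩ := List.exists_cons_of_ne_nil hl
  simp [replaceHead, hu.length_eq]
  omega

theorem card_mul_card_kraftList_le {α : Type*} (u : α → ℕ → List ℕ) {c : ℕ}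
    (hu : ∀ a, IsLeafExpansion (u a) c) (hinj : Function.Injective fun p : α × ℕ => u p.1 p.2)
    (n : ℕ) : Nat.card α * Nat.card (KraftList n) ≤ Nat.card (KraftList (n + c)) := by
  rw [← Nat.card_prod]
  refine Nat.card_le_card_of_injective (fun p => ⟨replaceHead (u p.1) p.2.1,
    by rw [length_replaceHead (hu p.1) p.2.2.2.ne_nil, p.2.2.1],
    p.2.2.2.replaceHead (hu p.1)⟩) ?_
  rintro ⟨a, ⟨l, _, hK⟩⟩ ⟨a', ⟨l', _, hK'⟩⟩ h
  obtain ⟨m, t, rfl⟩ := List.exists_cons_of_ne_nil hK.ne_nil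
  obtain ⟨m', t', rfl⟩ := List.exists_cons_of_ne_nil hK'.ne_nil
  have h : u a m ++ t = u a' m' ++ t' := congrArg Subtype.val h
  obtain ⟨hhead, rfl⟩ := List.append_inj h (by rw [(hu a).length_eq, (hu a').length_eq])
  obtain ⟨rfl, rfl⟩ := Prod.ext_iff.1 (hinj (a₁ := (a, m)) (a₂ := (a', m')) hhead)
  rfl

def splitLeaf (m : ℕ) : List ℕ := [m + 1, m + 1]

theorem isLeafExpansion_splitLeaf : IsLeafExpansion splitLeaf 1 where
  length_eq _ := rfl
  sortedGE _ := List.sortedGE_iff_pairwise.2 (by simp [splitLeaf])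
  le_of_mem _ := by simp [splitLeaf]
  kraftSum_eq _ := by simp [splitLeaf, kraftSum, pow_succ]; ring

def graft (b : Bool) (m : ℕ) : List ℕ :=
  if b then [m + 2, m + 2, m + 2, m + 2] else [m + 3, m + 3, m + 2, m + 1]

theorem isLeafExpansion_graft (b : Bool) : IsLeafExpansion (graft b) 3 := by
  cases b <;> exact
    { length_eq := fun _ => rfl
      sortedGE := fun _ => List.sortedGE_iff_pairwise.2 (by simp [graft])
      le_of_mem := fun _ => by simp [graft]
      kraftSum_eq := fun _ => by simp [graft, kraftSum, pow_succ]; ring }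

theorem graft_injective : Function.Injective fun p : Bool × ℕ => graft p.1 p.2 := by
  rintro ⟨_ | _, m⟩ ⟨_ | _, m'⟩ h <;> (simp [graft] at h ⊢; omega)

theorem monotone_card_kraftList : Monotone fun n => Nat.card (KraftList n) :=
  monotone_nat_of_le_succ fun n => by
    simpa using card_mul_card_kraftList_le (fun (_ : Unit) => splitLeaf)
      (fun _ => isLeafExpansion_splitLeaf)
      (fun p q h => Prod.ext (Subsingleton.elim _ _) (by simpa [splitLeaf] using h)) n

theorem two_mul_card_kraftList_le (n : ℕ) :
    2 * Nat.card (KraftList n) ≤ Nat.card (KraftList (n + 3)) := by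
  simpa using card_mul_card_kraftList_le graft isLeafExpansion_graft graft_injective n

theorem two_le_card_kraftList_four : 2 ≤ Nat.card (KraftList 4) := by
  have hK (b : Bool) : IsKraft (graft b 0) := by
    refine ⟨(isLeafExpansion_graft b).sortedGE 0, fun x hx => ?_, ?_⟩
    · cases b <;> simp [graft] at hx <;> omega
    · rw [(isLeafExpansion_graft b).kraftSum_eq]; simp
  have : Nontrivial (KraftList 4) :=
    ⟨⟨⟨graft true 0, rfl, hK true⟩, ⟨graft false 0, rfl, hK false⟩,
      fun h => by simpa [graft] using congrArg Subtype.val h⟩⟩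
  exact Finite.one_lt_card_iff_nontrivial.2 this

theorem two_pow_succ_le_card_kraftList (k : ℕ) :
    2 ^ (k + 1) ≤ Nat.card (KraftList (4 + 3 * k)) := by
  induction k with
  | zero => simpa using two_le_card_kraftList_four
  | succ k ih =>
    calc 2 ^ (k + 1 + 1) = 2 * 2 ^ (k + 1) := by ring
      _ ≤ 2 * Nat.card (KraftList (4 + 3 * k)) := by gcongr
      _ ≤ _ := two_mul_card_kraftList_le _

theorem two_rpow_div_three_le_two_mul {n : ℕ} {z : ℝ} (hz : 0 ≤ z) (h : (2 : ℝ) ^ n ≤ 8 * z ^ 3) :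
    (2 : ℝ) ^ ((n : ℝ) / 3) ≤ 2 * z := by
  have hcube : ((2 : ℝ) ^ ((n : ℝ) / 3)) ^ 3 = 2 ^ n := by
    rw [← Real.rpow_mul_natCast (by norm_num), Nat.cast_ofNat, div_mul_cancel₀ _ (by norm_num),
      Real.rpow_natCast]
  refine le_of_pow_le_pow_left₀ (by norm_num) (by positivity) (n := 3) ?_
  rw [hcube]
  linarith [show (2 * z) ^ 3 = 8 * z ^ 3 by ring]

theorem Z_eq_card_kraftList (n : ℕ) : Z n = Nat.card (KraftList n) :=
  Nat.card_congr (kraftVecEquivKraftList n)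

/-- For every `n ≥ 4`, `Z_n ≥ 2 · 2^{⌊(n-4)/3⌋}`; consequently
`8 · Z_n³ ≥ 2^n`, i.e. `Z_n ≥ (1/2) · 2^{n/3}`, so `Z_n` grows at least like
`(∛2)^n`. -/
theorem stmt15 (n : ℕ) (hn : 4 ≤ n) :
    2 * 2 ^ ((n - 4) / 3) ≤ Z n ∧
    2 ^ n ≤ 8 * (Z n) ^ 3 ∧
    (1 / 2 : ℝ) * (2 : ℝ) ^ ((n : ℝ) / 3) ≤ (Z n : ℝ) := by
  set k := (n - 4) / 3
  have hZ : 2 ^ (k + 1) ≤ Z n := by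
    rw [Z_eq_card_kraftList]
    exact (two_pow_succ_le_card_kraftList k).trans (monotone_card_kraftList (by omega))
  have hcube : 2 ^ n ≤ 8 * Z n ^ 3 :=
    calc 2 ^ n ≤ 2 ^ (3 * (k + 1) + 3) := Nat.pow_le_pow_right (by norm_num) (by omega)
      _ = 8 * (2 ^ (k + 1)) ^ 3 := by ring
      _ ≤ 8 * Z n ^ 3 := by gcongr
  refine ⟨by simpa [pow_succ, mul_comm] using hZ, hcube, ?_⟩
  have := two_rpow_div_three_le_two_mul (Nat.cast_nonneg (Z n)) (by exact_mod_cast hcube)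
  linarith
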